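/- arXiv:2004.08454 — 3 statements merged into one kernel-verified Lean document; each statement's English description precedes it below -/
import Mathlib

section
/- If C is a linear code over a finite field F of block length n with dual distance d, then the uniform distribution over codewords of C is (d-1)-wise independent with respect to the uniform distribution on F^n; that is, for every subset S of coordinates with |S| ≤ d-1, the marginal distribution on coordinates S of a uniformly random codeword equals the uniform distribution on F^S. -/
/-- If `C` is a linear code over a finite field `F` of block length `n`
with dual distance `d`, then the uniform distribution over codewords is
`(d-1)`-wise independent w.r.t. the uniform distribution on `F^n`: for every
coordinate set `S` with `|S| ≤ d-1` and every target assignment `w`, the number of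
codewords agreeing with `w` on `S` times `|F|^|S|` equals `|C|`. -/
theorem stmt0 {F : Type*} [Field F] [Fintype F] [DecidableEq F] {n d : ℕ}
    (C : Submodule F (Fin n → F))
    (hd : IsLeast {wt : ℕ | ∃ y : Fin n → F, y ≠ 0 ∧
      (∀ c ∈ C, ∑ i, y i * c i = 0) ∧ hammingNorm y = wt} d)
    (S : Finset (Fin n)) (hS : S.card ≤ d - 1) (w : Fin n → F) :
    Nat.card {c : Fin n → F // c ∈ C ∧ ∀ i ∈ S, c i = w i} * Fintype.card F ^ S.card
      = Nat.card C := by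
  classical
  -- d ≥ 1
  obtain ⟨y₀, hy₀ne, _, hy₀wt⟩ := hd.1
  have hd1 : 1 ≤ d := by
    rcases Nat.eq_zero_or_pos d with h0 | h
    · exfalso
      apply hy₀ne
      rw [h0] at hy₀wt
      simpa [hammingNorm_eq_zero] using hy₀wt
    · exact h
  have hScard : S.card < d := lt_of_le_of_lt hS (Nat.sub_lt hd1 one_pos)
  -- the restriction map
  set φ : C →ₗ[F] (↥S → F) :=
    (LinearMap.funLeft F F (fun j : S => (j : Fin n))).comp C.subtype with hφ
  have hφ_apply : ∀ (c : C) (j : S), φ c j = (c : Fin n → F) j := fun _ _ => rfl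
  -- surjectivity from the dual distance bound
  have hsurj : Function.Surjective φ := by
    rw [← LinearMap.range_eq_top]
    by_contra hne
    obtain ⟨f, hf0, hfbot⟩ := Submodule.exists_dual_map_eq_bot_of_lt_top
      (lt_top_iff_ne_top.mpr hne) inferInstance
    set a : S → F := fun j => f (fun j' => if j = j' then 1 else 0) with ha
    have hfv : ∀ v : ↥S → F, f v = ∑ j, v j * a j := by
      intro v
      rw [LinearMap.pi_apply_eq_sum_univ f v]
      simp [ha, smul_eq_mul]
    set y : Fin n → F := fun i => if h : i ∈ S then a ⟨i, h⟩ else 0 with hy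
    have hy_ne : y ≠ 0 := by
      have : ∃ j : S, a j ≠ 0 := by
        by_contra hall
        push_neg at hall
        apply hf0
        ext v
        simp [hfv, hall]
      obtain ⟨j, hj⟩ := this
      intro h0
      apply hj
      have := congrFun h0 (j : Fin n)
      simpa [hy, j.2] using this
    have hdual : ∀ c ∈ C, ∑ i, y i * c i = 0 := by
      intro c hc
      have hmem : f (φ ⟨c, hc⟩) ∈ Submodule.map f (LinearMap.range φ) :=
        Submodule.mem_map_of_mem (LinearMap.mem_range_self φ ⟨c, hc⟩)
      rw [hfbot] at hmem
      have hf0' : f (φ ⟨c, hc⟩) = 0 := hmem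
      rw [hfv] at hf0'
      calc ∑ i, y i * c i = ∑ i ∈ S, y i * c i := by
            refine (Finset.sum_subset (Finset.subset_univ S) ?_).symm
            intro i _ hi
            simp [hy, hi]
          _ = ∑ j : S, y (j : Fin n) * c (j : Fin n) := (Finset.sum_coe_sort S _).symm
          _ = ∑ j : S, φ ⟨c, hc⟩ j * a j := by
            refine Finset.sum_congr rfl fun j _ => ?_
            rw [hφ_apply]
            rw [mul_comm]
            congr 1
            simp [hy, j.2]
          _ = 0 := hf0'
    have hnorm : hammingNorm y ≤ S.card := by
      rw [hammingNorm]
      apply Finset.card_le_card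
      intro i hi
      simp only [Finset.mem_filter] at hi
      by_contra hiS
      exact hi.2 (by simp [hy, hiS])
    have := hd.2 ⟨y, hy_ne, hdual, rfl⟩
    omega
  -- counting
  obtain ⟨c₀, hc₀⟩ := hsurj (fun j => w (j : Fin n))
  set K := LinearMap.ker φ with hK
  have e1 : {c : Fin n → F // c ∈ C ∧ ∀ i ∈ S, c i = w i} ≃ K := by
    refine ⟨fun c => ⟨⟨c.1, c.2.1⟩ - c₀, ?_⟩, fun k => ⟨(↑(k.1 + c₀) : Fin n → F), ⟨(k.1 + c₀).2, ?_⟩⟩, ?_, ?_⟩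
    · rw [LinearMap.mem_ker, map_sub, hc₀]
      ext j
      simp only [Pi.sub_apply, hφ_apply, Pi.zero_apply]
      rw [c.2.2 (j : Fin n) j.2, sub_self]
    · intro i hi
      have hk : φ k.1 = 0 := k.2
      have h1 : (k.1 : Fin n → F) i = 0 := by
        have := congrFun hk ⟨i, hi⟩
        simpa [hφ_apply] using this
      have h2 : (c₀ : Fin n → F) i = w i := by
        have := congrFun hc₀ ⟨i, hi⟩
        simpa [hφ_apply] using this
      show (k.1 : Fin n → F) i + (c₀ : Fin n → F) i = w i
      rw [h1, h2, zero_add]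
    · intro c
      ext
      show ((⟨c.1, c.2.1⟩ - c₀) + c₀ : C).1 _ = _
      rw [sub_add_cancel]
    · intro k
      ext x
      show ((k.1 + c₀ - c₀ : C) : Fin n → F) x = (k.1 : Fin n → F) x
      rw [add_sub_cancel_right]
  rw [Nat.card_congr e1]
  have e2 : (C ⧸ K) ≃ₗ[F] (↥S → F) := LinearMap.quotKerEquivOfSurjective φ hsurj
  rw [Submodule.card_eq_card_quotient_mul_card K, Nat.card_congr e2.toEquiv]
  congr 1
  rw [Nat.card_eq_fintype_card, Fintype.card_fun, Fintype.card_coe]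
end

section
/- Let C ⊆ F^n be a code over a finite field F and S ⊆ [n]. If the S-restricted Hamming balls of radius 2r around distinct codewords (restricted to coordinates outside S) are pairwise disjoint (equivalently, any two distinct codewords satisfy Δ_S(c,c') > 4r), then for x uniform on F^{[n]∖S}, the probability that there exists c ∈ C with Δ_S(c,x) ≤ r is at most |B_r|/|B_{2r}|, where |B_t| is the cardinality of an S-restricted Hamming ball of radius t. -/
/-!
Balls of radius `2r` around distinct codewords are disjoint, so the number `N` of codewords
satisfies `N · |B_{2r}| ≤ |F^{[n]∖S}|`. The balls of radius `r` are disjoint as well, and by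
translation invariance all have `|B_r|` points, so the points within distance `r` of the code
number exactly `N · |B_r|`.
-/

open Finset

theorem hammingDist_add_left {ι β : Type*} [Fintype ι] [DecidableEq β] [AddGroup β]
    (c x y : ι → β) : hammingDist (c + x) (c + y) = hammingDist x y := by
  rw [hammingDist_eq_hammingNorm, hammingDist_eq_hammingNorm, neg_add_rev, add_assoc,
    neg_add_cancel_left]

section HammingBall

variable {ι β : Type*} [Fintype ι] [DecidableEq ι] [Fintype β] [DecidableEq β]

def hammingBall (c : ι → β) (t : ℕ) : Finset (ι → β) := {x | hammingDist c x ≤ t}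

@[simp]
theorem mem_hammingBall {c x : ι → β} {t : ℕ} : x ∈ hammingBall c t ↔ hammingDist c x ≤ t := by
  simp [hammingBall]

theorem Nat.card_hammingDist_le (c : ι → β) (t : ℕ) :
    Nat.card {x // hammingDist c x ≤ t} = #(hammingBall c t) := by
  rw [Nat.card_eq_fintype_card, Fintype.card_subtype, hammingBall]

theorem disjoint_hammingBall {c c' : ι → β} {t : ℕ} (h : 2 * t < hammingDist c c') :
    Disjoint (hammingBall c t) (hammingBall c' t) := by
  refine disjoint_left.2 fun x hx hx' => ?_
  rw [mem_hammingBall] at hx hx'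
  have := hammingDist_triangle c x c'
  rw [hammingDist_comm x c'] at this
  omega

theorem hammingBall_eq_map [AddGroup β] (c : ι → β) (t : ℕ) :
    hammingBall c t = (hammingBall (0 : ι → β) t).map (addLeftEmbedding c) := by
  ext x
  refine ⟨fun hx => mem_map.2 ⟨-c + x, ?_, by simp⟩, fun hx => ?_⟩
  · rwa [mem_hammingBall, ← hammingDist_add_left c, add_zero, add_neg_cancel_left,
      ← mem_hammingBall]
  · obtain ⟨y, hy, rfl⟩ := mem_map.1 hx
    rwa [mem_hammingBall, addLeftEmbedding_apply, ← add_zero c, add_assoc, zero_add,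
      hammingDist_add_left, ← mem_hammingBall]

theorem card_hammingBall [AddGroup β] (c : ι → β) (t : ℕ) :
    #(hammingBall c t) = #(hammingBall (0 : ι → β) t) := by
  rw [hammingBall_eq_map, card_map]

variable [AddGroup β] {D : Finset (ι → β)} {t : ℕ}

theorem card_biUnion_hammingBall
    (hD : (D : Set (ι → β)).Pairwise fun c c' => 2 * t < hammingDist c c') :
    #(D.biUnion (hammingBall · t)) = #D * #(hammingBall (0 : ι → β) t) := by
  rw [card_biUnion fun c hc c' hc' hne => disjoint_hammingBall (hD hc hc' hne),
    sum_congr rfl fun c _ => card_hammingBall c t, sum_const, smul_eq_mul]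

theorem card_mul_card_hammingBall_le
    (hD : (D : Set (ι → β)).Pairwise fun c c' => 2 * t < hammingDist c c') :
    #D * #(hammingBall (0 : ι → β) t) ≤ Fintype.card β ^ Fintype.card ι := by
  rw [← card_biUnion_hammingBall hD, ← Fintype.card_fun]
  exact card_le_univ _

theorem card_biUnion_hammingBall_mul_le {r : ℕ}
    (hD : (D : Set (ι → β)).Pairwise fun c c' => 4 * r < hammingDist c c') :
    #(D.biUnion (hammingBall · r)) * #(hammingBall (0 : ι → β) (2 * r)) ≤
      #(hammingBall (0 : ι → β) r) * Fintype.card β ^ Fintype.card ι := by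
  have hD₂ : (D : Set (ι → β)).Pairwise fun c c' => 2 * (2 * r) < hammingDist c c' :=
    hD.mono' fun c c' h => by omega
  rw [card_biUnion_hammingBall (hD₂.mono' fun c c' h => by omega), mul_comm #D, mul_assoc]
  exact Nat.mul_le_mul_left _ (card_mul_card_hammingBall_le hD₂)

end HammingBall

/-- if any two distinct codewords of `C` satisfy `Δ_S(c,c') > 4r`
(so that `S`-restricted balls of radius `2r` are pairwise disjoint), then for `x`
uniform on `F^{[n]∖S}`, `P(∃ c ∈ C, Δ_S(c,x) ≤ r) ≤ |B_r|/|B_{2r}|`; stated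
multiplicatively:  (#bad x) · |B_{2r}| ≤ |B_r| · |F^{[n]∖S}|. -/
theorem stmt4 {F : Type*} [Field F] [Fintype F] [DecidableEq F] {n r : ℕ}
    (C : Set (Fin n → F)) (S : Finset (Fin n))
    (hC : ∀ c ∈ C, ∀ c' ∈ C, c ≠ c' →
      4 * r < hammingDist (fun i : {i : Fin n // i ∉ S} => c i.1)
        (fun i : {i : Fin n // i ∉ S} => c' i.1)) :
    Nat.card {x : {i : Fin n // i ∉ S} → F // ∃ c ∈ C,
        hammingDist (fun i : {i : Fin n // i ∉ S} => c i.1) x ≤ r}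
      * Nat.card {x : {i : Fin n // i ∉ S} → F // hammingDist (fun _ => (0 : F)) x ≤ 2 * r}
    ≤ Nat.card {x : {i : Fin n // i ∉ S} → F // hammingDist (fun _ => (0 : F)) x ≤ r}
      * Fintype.card F ^ (Fintype.card {i : Fin n // i ∉ S}) := by
  classical
  let res : (Fin n → F) → {i : Fin n // i ∉ S} → F := fun c i => c i.1
  let D := (Set.toFinite (res '' C)).toFinset
  have hD : (D : Set ({i : Fin n // i ∉ S} → F)).Pairwise
      fun d d' => 4 * r < hammingDist d d' := by
    rintro _ hd _ hd' hne
    obtain ⟨c, hc, rfl⟩ := (Set.Finite.mem_toFinset _).1 hd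
    obtain ⟨c', hc', rfl⟩ := (Set.Finite.mem_toFinset _).1 hd'
    exact hC c hc c' hc' (ne_of_apply_ne res hne)
  have hBad : Nat.card {x // ∃ c ∈ C, hammingDist (res c) x ≤ r} =
      #(D.biUnion (hammingBall · r)) := by
    rw [Nat.card_eq_fintype_card, Fintype.card_subtype]
    congr 1
    ext x
    simp [D]
  rw [hBad, Nat.card_hammingDist_le, Nat.card_hammingDist_le]
  exact card_biUnion_hammingBall_mul_le hD
end

section
/- Let C be a length-n linear code over a finite field F that admits (combinatorial) correction of 2r errors and s erasures, meaning any two distinct codewords c, c' satisfy Δ_S(c,c') > 4r for every S ⊆ [n] with |S| ≤ s. Suppose r ≤ (n-s)/(8e). Then for any fixed S with |S| ≤ s, if x is uniform on F^{[n]∖S}, the probability that some codeword c satisfies Δ_S(c,x) ≤ r is at most (r+1)·2^{-r}. -/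
/-!
Restricted to the coordinates outside `S`, the codewords are pairwise more than `4r` apart, so
the Hamming spheres of radius `2r` around them are disjoint and
`|D| · C(m, 2r) (q-1)^{2r} ≤ q^m`. The `r`-neighbourhood of the restricted code has at most
`|D| (r+1) C(m, r) (q-1)^r` points, and `C(m, 2r) ≥ 2^r C(m, r)` once `6r ≤ m`, which
`r ≤ (n-s)/(8e)` guarantees. Dividing gives density at most `(r+1) 2^{-r}`.
-/

open Finset

namespace Nat

lemma choose_le_choose_of_le_of_two_mul_le {m i r : ℕ} (hir : i ≤ r) (hrm : 2 * r ≤ m) :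
    m.choose i ≤ m.choose r := by
  induction r, hir using Nat.le_induction with
  | base => exact le_rfl
  | succ k _ ih => exact (ih (by omega)).trans (choose_le_succ_of_lt_half_left (by omega))

lemma two_mul_choose_le_choose_succ {m k : ℕ} (h : 3 * k + 2 ≤ m) :
    2 * m.choose k ≤ m.choose (k + 1) := by
  refine Nat.le_of_mul_le_mul_right ?_ (Nat.succ_pos k)
  calc 2 * m.choose k * (k + 1) = m.choose k * (2 * (k + 1)) := by ring
    _ ≤ m.choose k * (m - k) := Nat.mul_le_mul_left _ (by omega)
    _ = m.choose (k + 1) * (k + 1) := (choose_succ_right_eq m k).symm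

lemma two_pow_mul_choose_le_choose_two_mul {m r : ℕ} (h : 6 * r ≤ m) :
    2 ^ r * m.choose r ≤ m.choose (2 * r) := by
  have step : ∀ j ≤ r, 2 ^ j * m.choose r ≤ m.choose (r + j) := by
    intro j
    induction j with
    | zero => simp
    | succ j ih =>
      intro hj
      calc 2 ^ (j + 1) * m.choose r = 2 * (2 ^ j * m.choose r) := by ring
        _ ≤ 2 * m.choose (r + j) := Nat.mul_le_mul_left 2 (ih (by omega))
        _ ≤ m.choose (r + j + 1) := two_mul_choose_le_choose_succ (by omega)
  simpa [two_mul] using step r le_rfl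

end Nat

section HammingBalls

variable {ι F : Type*} [Fintype ι] [DecidableEq ι] [Fintype F] [DecidableEq F]

lemma card_filter_diff_eq (x : ι → F) (A : Finset ι) :
    #{y : ι → F | ({i | x i ≠ y i} : Finset ι) = A} = (Fintype.card F - 1) ^ #A := by
  have hpi : ({y : ι → F | ({i | x i ≠ y i} : Finset ι) = A} : Finset (ι → F))
      = Fintype.piFinset (fun i => if i ∈ A then ({a | a ≠ x i} : Finset F) else {x i}) := by
    ext y
    simp only [mem_filter, mem_univ, true_and, Fintype.mem_piFinset]
    constructor
    · rintro rfl i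
      by_cases h : x i = y i <;> simp_all [ne_comm]
    · intro h
      ext i
      have hi := h i
      by_cases hA : i ∈ A <;> simp_all [ne_comm]
  have hcard (i : ι) : #(if i ∈ A then ({a | a ≠ x i} : Finset F) else {x i})
      = if i ∈ A then Fintype.card F - 1 else 1 := by
    split_ifs <;> simp [filter_ne', card_erase_of_mem]
  simp_rw [hpi, Fintype.card_piFinset, hcard, prod_ite_mem, univ_inter, prod_const]

lemma card_hammingSphere (x : ι → F) (k : ℕ) :
    #{y : ι → F | hammingDist x y = k}
      = (Fintype.card ι).choose k * (Fintype.card F - 1) ^ k := by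
  have hmaps : ∀ y ∈ ({y : ι → F | hammingDist x y = k} : Finset (ι → F)),
      ({i | x i ≠ y i} : Finset ι) ∈ powersetCard k (univ : Finset ι) := by
    intro y hy
    rw [mem_powersetCard_univ]
    exact (mem_filter.mp hy).2
  have hfiber : ∀ A ∈ powersetCard k (univ : Finset ι),
      #{y ∈ ({y : ι → F | hammingDist x y = k} : Finset (ι → F)) |
          ({i | x i ≠ y i} : Finset ι) = A} = (Fintype.card F - 1) ^ k := by
    intro A hA
    rw [mem_powersetCard_univ] at hA
    rw [filter_filter, ← hA, ← card_filter_diff_eq x A]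
    congr 1
    ext y
    simp only [mem_filter, mem_univ, true_and, and_iff_right_iff_imp]
    rintro rfl
    rfl
  rw [card_eq_sum_card_fiberwise hmaps, sum_congr rfl hfiber, sum_const, card_powersetCard,
    card_univ, smul_eq_mul]

lemma card_hammingBall_le (x : ι → F) {r : ℕ} (hr : 2 * r ≤ Fintype.card ι)
    (hF : 1 < Fintype.card F) :
    #{y : ι → F | hammingDist x y ≤ r}
      ≤ (r + 1) * ((Fintype.card ι).choose r * (Fintype.card F - 1) ^ r) := by
  have hball : ({y : ι → F | hammingDist x y ≤ r} : Finset (ι → F))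
      = (range (r + 1)).biUnion fun k => {y | hammingDist x y = k} := by
    ext y
    simp
  have hsphere : ∀ k ∈ range (r + 1), #{y : ι → F | hammingDist x y = k}
      ≤ (Fintype.card ι).choose r * (Fintype.card F - 1) ^ r := by
    intro k hk
    have hkr : k ≤ r := by simpa [Nat.lt_succ_iff] using hk
    rw [card_hammingSphere]
    exact Nat.mul_le_mul (Nat.choose_le_choose_of_le_of_two_mul_le hkr hr)
      (Nat.pow_le_pow_right (by omega) hkr)
  rw [hball]
  exact card_biUnion_le.trans ((sum_le_card_nsmul _ _ _ hsphere).trans_eq (by simp))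

lemma card_mul_card_hammingSphere_le (D : Finset (ι → F)) {t : ℕ}
    (hD : (D : Set (ι → F)).Pairwise fun d d' => 2 * t < hammingDist d d') :
    #D * ((Fintype.card ι).choose t * (Fintype.card F - 1) ^ t)
      ≤ Fintype.card F ^ Fintype.card ι := by
  have hdisj : (D : Set (ι → F)).PairwiseDisjoint
      fun d => ({y : ι → F | hammingDist d y = t} : Finset (ι → F)) := by
    intro d hd d' hd' hne
    refine disjoint_left.mpr fun y hy hy' => ?_
    simp only [mem_filter, mem_univ, true_and] at hy hy'
    have := hammingDist_triangle d y d'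
    rw [hammingDist_comm y d'] at this
    exact (hD hd hd' hne).not_ge (by omega)
  calc #D * ((Fintype.card ι).choose t * (Fintype.card F - 1) ^ t)
      = ∑ d ∈ D, #{y : ι → F | hammingDist d y = t} := by
        simp [card_hammingSphere]
    _ = #(D.biUnion fun d => {y : ι → F | hammingDist d y = t}) := (card_biUnion hdisj).symm
    _ ≤ Fintype.card (ι → F) := card_le_univ _
    _ = Fintype.card F ^ Fintype.card ι := Fintype.card_fun

lemma card_exists_hammingDist_le_le (D : Finset (ι → F)) {r : ℕ}
    (hr : 2 * r ≤ Fintype.card ι) (hF : 1 < Fintype.card F) :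
    #{x : ι → F | ∃ d ∈ D, hammingDist d x ≤ r}
      ≤ #D * ((r + 1) * ((Fintype.card ι).choose r * (Fintype.card F - 1) ^ r)) := by
  have hcover : ({x : ι → F | ∃ d ∈ D, hammingDist d x ≤ r} : Finset (ι → F))
      = D.biUnion fun d => {y | hammingDist d y ≤ r} := by
    ext x
    simp
  rw [hcover]
  exact card_biUnion_le.trans
    ((sum_le_card_nsmul _ _ _ fun d _ => card_hammingBall_le d hr hF).trans_eq (smul_eq_mul _ _))

theorem card_exists_hammingDist_le_mul_two_pow_le (D : Finset (ι → F)) {r : ℕ}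
    (hD : (D : Set (ι → F)).Pairwise fun d d' => 4 * r < hammingDist d d')
    (hr : 6 * r ≤ Fintype.card ι) (hF : 1 < Fintype.card F) :
    #{x : ι → F | ∃ d ∈ D, hammingDist d x ≤ r} * 2 ^ r
      ≤ (r + 1) * Fintype.card F ^ Fintype.card ι := by
  set V : ℕ → ℕ := fun t => (Fintype.card ι).choose t * (Fintype.card F - 1) ^ t
  have hpack : #D * V (2 * r) ≤ Fintype.card F ^ Fintype.card ι :=
    card_mul_card_hammingSphere_le D (hD.mono' fun _ _ h => by omega)
  have hcover := card_exists_hammingDist_le_le D (by omega : 2 * r ≤ Fintype.card ι) hF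
  have hgrowth : 2 ^ r * V r ≤ V (2 * r) := by
    calc 2 ^ r * V r = (2 ^ r * (Fintype.card ι).choose r) * (Fintype.card F - 1) ^ r := by ring
      _ ≤ (Fintype.card ι).choose (2 * r) * (Fintype.card F - 1) ^ (2 * r) :=
        Nat.mul_le_mul (Nat.two_pow_mul_choose_le_choose_two_mul hr)
          (Nat.pow_le_pow_right (by omega) (by omega))
  have hVpos : 0 < V (2 * r) :=
    Nat.mul_pos (Nat.choose_pos (by omega)) (Nat.pow_pos (by omega))
  refine Nat.le_of_mul_le_mul_right ?_ hVpos
  calc #{x : ι → F | ∃ d ∈ D, hammingDist d x ≤ r} * 2 ^ r * V (2 * r)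
      ≤ #D * ((r + 1) * V r) * 2 ^ r * V (2 * r) := by gcongr
    _ = #D * V (2 * r) * ((r + 1) * (2 ^ r * V r)) := by ring
    _ ≤ Fintype.card F ^ Fintype.card ι * ((r + 1) * V (2 * r)) := by gcongr
    _ = (r + 1) * Fintype.card F ^ Fintype.card ι * V (2 * r) := by ring

end HammingBalls

lemma hammingDist_restrict_compl {ι F : Type*} [Fintype ι] [DecidableEq ι] [DecidableEq F]
    (S : Finset ι) (c c' : ι → F) :
    hammingDist (fun i : {i // i ∉ S} => c i) (fun i => c' i)
      = #{i | i ∉ S ∧ c i ≠ c' i} := by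
  rw [hammingDist, ← Fintype.card_subtype, ← Fintype.card_subtype]
  exact Fintype.card_congr (Equiv.subtypeSubtypeEquivSubtypeInter (· ∉ S) fun i => c i ≠ c' i)

lemma six_mul_le_sub_of_le_div_exp {n r s k : ℕ}
    (hr : (r : ℝ) ≤ ((n : ℝ) - s) / (8 * Real.exp 1)) (hk : k ≤ s) : 6 * r ≤ n - k := by
  have h8e : (16 : ℝ) ≤ 8 * Real.exp 1 := by linarith [Real.add_one_le_exp 1]
  have hrs : (r : ℝ) * (8 * Real.exp 1) ≤ n - s := (le_div_iff₀ (by positivity)).mp hr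
  have hks : (k : ℝ) ≤ s := by exact_mod_cast hk
  have h16 : ((16 * r + k : ℕ) : ℝ) ≤ n := by
    push_cast
    nlinarith [(Nat.cast_nonneg r : (0 : ℝ) ≤ r)]
  have : 16 * r + k ≤ n := by exact_mod_cast h16
  omega

/-- random string is far from the code: let `C` be a length-`n` linear
code admitting combinatorial correction of `2r` errors and `s` erasures (any two
distinct codewords satisfy `Δ_S(c,c') > 4r` for every `|S| ≤ s`), with
`r ≤ (n-s)/(8e)`. Then for any fixed `S` with `|S| ≤ s` and `x` uniform on
`F^{[n]∖S}`, `P(∃ c ∈ C, Δ_S(c,x) ≤ r) ≤ (r+1)·2^{-r}`. -/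
theorem stmt6 {F : Type*} [Field F] [Fintype F] [DecidableEq F] {n r s : ℕ}
    (C : Submodule F (Fin n → F))
    (hC : ∀ S : Finset (Fin n), S.card ≤ s → ∀ c ∈ C, ∀ c' ∈ C, c ≠ c' →
      4 * r < (Finset.univ.filter (fun i : Fin n => i ∉ S ∧ c i ≠ c' i)).card)
    (hr : (r : ℝ) ≤ ((n : ℝ) - s) / (8 * Real.exp 1))
    (S : Finset (Fin n)) (hS : S.card ≤ s) :
    (Nat.card {x : {i : Fin n // i ∉ S} → F // ∃ c ∈ C,
        hammingDist (fun i : {i : Fin n // i ∉ S} => c i.1) x ≤ r} : ℝ)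
      / (Fintype.card F : ℝ) ^ (Fintype.card {i : Fin n // i ∉ S})
    ≤ ((r : ℝ) + 1) * ((2 : ℝ) ^ r)⁻¹ := by
  classical
  set restrict : (Fin n → F) → {i : Fin n // i ∉ S} → F := fun c i => c i.1
  set D := ((C : Set (Fin n → F)).toFinset).image restrict
  have hD : (D : Set ({i : Fin n // i ∉ S} → F)).Pairwise
      fun d d' => 4 * r < hammingDist d d' := by
    simp only [D, coe_image, Set.coe_toFinset]
    rintro _ ⟨c, hc, rfl⟩ _ ⟨c', hc', rfl⟩ hne
    rw [hammingDist_restrict_compl]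
    exact hC S hS c hc c' hc' fun h => hne (congrArg restrict h)
  have hm : 6 * r ≤ Fintype.card {i : Fin n // i ∉ S} := by
    rw [Fintype.card_subtype_compl, Fintype.card_fin, Fintype.card_coe]
    exact six_mul_le_sub_of_le_div_exp hr hS
  have hcount := card_exists_hammingDist_le_mul_two_pow_le D hD hm Fintype.one_lt_card
  have hevent : Nat.card {x : {i : Fin n // i ∉ S} → F // ∃ c ∈ C,
      hammingDist (fun i : {i : Fin n // i ∉ S} => c i.1) x ≤ r}
        = #{x | ∃ d ∈ D, hammingDist d x ≤ r} := by
    simp [D, restrict, Nat.card_eq_fintype_card, Fintype.card_subtype]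
  rw [hevent, div_le_iff₀ (by positivity), mul_right_comm, ← div_eq_mul_inv,
    le_div_iff₀ (by positivity)]
  exact_mod_cast hcount
end
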